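/- arXiv:2401.00827 — 4 statements merged into one kernel-verified Lean document; each statement's English description precedes it below -/
import Mathlib

section
/- Let (P', <) be a finite poset with n' elements in which the number of triples (x, y, z) ∈ P'³ with x < z < y is less than n'²ℓ/2. Then the number of elements x ∈ P' satisfying both |D(x)| ≥ 2√(n'ℓ) and |U(x)| ≥ 2√(n'ℓ) is at most n'/8, where D(x) = {y ∈ P' : y < x} and U(x) = {y ∈ P' : y > x}. -/
/-- If the number of triples `(x, y, z)` with `x < z < y` is less than `n'² ℓ / 2`, then the
number of elements `x` with both `|D(x)| ≥ 2√(n'ℓ)` and `|U(x)| ≥ 2√(n'ℓ)` is at most `n'/8`. -/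
theorem few_elements_with_large_up_and_down {P : Type*} [PartialOrder P] [Fintype P]
    [DecidableRel ((· < ·) : P → P → Prop)] (n' ℓ : ℕ)
    (hn : Fintype.card P = n') (hℓ : 0 < ℓ)
    (h : ((Finset.univ.filter fun t : P × P × P => t.1 < t.2.2 ∧ t.2.2 < t.2.1).card : ℝ)
      < (n' : ℝ) ^ 2 * ℓ / 2) :
    ((Finset.univ.filter fun x : P =>
        2 * Real.sqrt (n' * ℓ) ≤ ((Finset.univ.filter fun y => y < x).card : ℝ) ∧
        2 * Real.sqrt (n' * ℓ) ≤ ((Finset.univ.filter fun y => x < y).card : ℝ)).card : ℝ)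
      ≤ (n' : ℝ) / 8 := by
  rcases Nat.eq_zero_or_pos n' with hn0 | hn0
  · have hP : Fintype.card P = 0 := hn.trans hn0
    have : ((Finset.univ.filter fun x : P =>
        2 * Real.sqrt (n' * ℓ) ≤ ((Finset.univ.filter fun y => y < x).card : ℝ) ∧
        2 * Real.sqrt (n' * ℓ) ≤ ((Finset.univ.filter fun y => x < y).card : ℝ)).card) ≤ 0 := by
      calc _ ≤ (Finset.univ : Finset P).card := Finset.card_filter_le _ _
        _ = 0 := by simpa using hP
    simp [hn0]
    omega
  -- key combinatorial identity
  haveI := Classical.decEq P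
  have key : (Finset.univ.filter fun t : P × P × P => t.1 < t.2.2 ∧ t.2.2 < t.2.1).card
      = ∑ z : P, (Finset.univ.filter fun y => y < z).card *
          (Finset.univ.filter fun y => z < y).card := by
    rw [Finset.card_eq_sum_card_fiberwise
      (f := fun t : P × P × P => t.2.2) (t := Finset.univ) (fun _ _ => Finset.mem_univ _)]
    refine Finset.sum_congr rfl fun z _ => ?_
    rw [← Finset.card_product]
    apply Finset.card_bij (fun t _ => (t.1, t.2.1))
    · intro t ht
      simp only [Finset.mem_filter, Finset.mem_univ, true_and, Finset.mem_product] at ht ⊢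
      obtain ⟨⟨h1, h2⟩, h3⟩ := ht
      exact ⟨h3 ▸ h1, h3 ▸ h2⟩
    · intro a ha b hb hab
      simp only [Finset.mem_filter, Finset.mem_univ, true_and] at ha hb
      obtain ⟨-, ha2⟩ := ha
      obtain ⟨-, hb2⟩ := hb
      injection hab with h1 h2
      exact Prod.ext h1 (Prod.ext h2 (ha2.trans hb2.symm))
    · intro p hp
      simp only [Finset.mem_product, Finset.mem_filter, Finset.mem_univ, true_and] at hp
      exact ⟨(p.1, p.2, z), by simp [hp.1, hp.2], rfl⟩
  set T := Finset.univ.filter fun x : P =>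
      2 * Real.sqrt (n' * ℓ) ≤ ((Finset.univ.filter fun y => y < x).card : ℝ) ∧
      2 * Real.sqrt (n' * ℓ) ≤ ((Finset.univ.filter fun y => x < y).card : ℝ) with hT
  have hsq : (2 * Real.sqrt (n' * ℓ)) * (2 * Real.sqrt (n' * ℓ)) = 4 * (n' * ℓ) := by
    have : Real.sqrt (n' * ℓ) * Real.sqrt (n' * ℓ) = (n' * ℓ : ℝ) :=
      Real.mul_self_sqrt (by positivity)
    nlinarith [this]
  have hlb : ∀ x ∈ T, (4 * ((n' : ℝ) * ℓ)) ≤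
      ((Finset.univ.filter fun y => y < x).card : ℝ) *
        ((Finset.univ.filter fun y => x < y).card : ℝ) := by
    intro x hx
    rw [hT, Finset.mem_filter] at hx
    obtain ⟨-, h1, h2⟩ := hx
    calc (4 : ℝ) * (n' * ℓ) = (2 * Real.sqrt (n' * ℓ)) * (2 * Real.sqrt (n' * ℓ)) := hsq.symm
      _ ≤ _ := mul_le_mul h1 h2 (by positivity) ((by positivity : (0:ℝ) ≤ _).trans h1)
  have hsum : (T.card : ℝ) * (4 * ((n' : ℝ) * ℓ)) ≤
      ∑ z : P, ((Finset.univ.filter fun y => y < z).card : ℝ) *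
        ((Finset.univ.filter fun y => z < y).card : ℝ) := by
    calc (T.card : ℝ) * (4 * ((n' : ℝ) * ℓ))
        = ∑ _z ∈ T, (4 * ((n' : ℝ) * ℓ)) := by rw [Finset.sum_const, nsmul_eq_mul]
      _ ≤ ∑ z ∈ T, ((Finset.univ.filter fun y => y < z).card : ℝ) *
          ((Finset.univ.filter fun y => z < y).card : ℝ) := Finset.sum_le_sum hlb
      _ ≤ _ := Finset.sum_le_sum_of_subset_of_nonneg (Finset.subset_univ T)
          (fun i _ _ => by positivity)
  have hcast : (∑ z : P, ((Finset.univ.filter fun y => y < z).card : ℝ) *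
      ((Finset.univ.filter fun y => z < y).card : ℝ))
      = ((Finset.univ.filter fun t : P × P × P => t.1 < t.2.2 ∧ t.2.2 < t.2.1).card : ℝ) := by
    rw [key]; push_cast; ring
  rw [hcast] at hsum
  have hlt : (T.card : ℝ) * (4 * ((n' : ℝ) * ℓ)) < (n' : ℝ) ^ 2 * ℓ / 2 := lt_of_le_of_lt hsum h
  have hpos : (0 : ℝ) < (n' : ℝ) * ℓ := by positivity
  nlinarith [hlt, hpos, (by positivity : (0:ℝ) < (ℓ:ℝ)), (by exact_mod_cast hn0 : (0:ℝ) < (n':ℝ))]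
end

section
/- Let k be a positive integer, (P, <) a finite poset, and ℓ a positive integer with ℓ < |P|/k. Then at least one of the following holds: (1) there exist k pairwise disjoint subsets A₁, …, A_k of P, each of size at least ℓ, with A₁ < A₂ < … < A_k; (2) there exists a subset Q of P with |Q| ≥ 7|P|/(16k) such that every x ∈ Q has fewer than 4√(|Q|ℓ) elements of Q below it; (3) there exists a subset Q of P with |Q| ≥ 7|P|/(16k) such that every x ∈ Q has fewer than 4√(|Q|ℓ) elements of Q above it. -/
/-!
Suppose (1) fails for `k = m + 1`. Stratify `P` by the largest `t ≤ m` such that `t` layered sets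
of size at least `ℓ` lie below `x`. Every point of the top stratum has fewer than `ℓ` points above
it, so, as (3) fails, that stratum has fewer than `q = 7|P|/(16k)` points, and by pigeonhole one of
the other `m` strata has more than `16q/7` points. Inside a stratum every open interval contains
fewer than `ℓ` points of the stratum. Take a subset `F` of it with `⌈16q/7⌉` points. As (2) and (3)
fail, fewer than `2q` points of `F` have fewer than `s = 4√(qℓ)` points of `F` below or above them,
so counting triples `a < x < b` in `F` gives `s²(|F| - 2q) ≤ ℓ|F|²/2`, which is false for this size
of `F`.
-/

open Finset

section Counting

variable {α : Type*}

lemma card_filter_card_filter_lt_lt (r : α → α → Prop) [DecidableRel r] {q s : ℝ}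
    (h : ∀ Q : Finset α, q ≤ #Q → ∃ x ∈ Q, s ≤ #{y ∈ Q | r y x}) (S : Finset α) :
    (#{x ∈ S | #{y ∈ S | r y x} < s} : ℝ) < q := by
  by_contra! hq
  obtain ⟨x, hx, hsx⟩ := h _ hq
  rw [mem_filter] at hx
  have hsub : #{y ∈ {x ∈ S | #{y ∈ S | r y x} < s} | r y x} ≤ #{y ∈ S | r y x} :=
    card_le_card (filter_subset_filter _ (filter_subset _ _))
  exact (hsx.trans (Nat.cast_le.2 hsub)).not_gt hx.2

variable [Preorder α] [DecidableRel ((· < ·) : α → α → Prop)]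

lemma two_mul_card_filter_lt_le_sq (S : Finset α) : 2 * #{p ∈ S ×ˢ S | p.1 < p.2} ≤ #S ^ 2 := by
  have hswap : #{p ∈ S ×ˢ S | p.1 < p.2} ≤ #{p ∈ S ×ˢ S | ¬ p.1 < p.2} := by
    refine card_le_card_of_injOn Prod.swap (fun p hp => ?_) Prod.swap_injective.injOn
    simp only [coe_filter, Set.mem_ofPred_eq, mem_product] at hp ⊢
    exact ⟨hp.1.symm, hp.2.asymm⟩
  have := card_filter_add_card_filter_not (s := S ×ˢ S) (fun p : α × α => p.1 < p.2)
  rw [card_product] at this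
  nlinarith

lemma sum_card_mul_card_le {F : Finset α} {ℓ : ℕ}
    (hthin : ∀ a ∈ F, ∀ b ∈ F, a < b → #{z ∈ F | a < z ∧ z < b} ≤ ℓ) :
    ∑ x ∈ F, #{y ∈ F | y < x} * #{y ∈ F | x < y} ≤ ℓ * #{p ∈ F ×ˢ F | p.1 < p.2} := by
  calc ∑ x ∈ F, #{y ∈ F | y < x} * #{y ∈ F | x < y}
      = ∑ a ∈ F, ∑ b ∈ F, #{x ∈ F | a < x ∧ x < b} := by
        simp only [card_filter, sum_mul_sum, ite_zero_mul_ite_zero, mul_one]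
        rw [sum_comm]
        exact sum_congr rfl fun a _ => sum_comm
    _ ≤ ∑ a ∈ F, ∑ b ∈ F, if a < b then ℓ else 0 := by
        gcongr with a ha b hb
        split_ifs with hab
        · exact hthin a ha b hb hab
        · rw [Nat.le_zero, card_eq_zero, filter_eq_empty_iff]
          exact fun x _ hx => hab (hx.1.trans hx.2)
    _ = ℓ * #{p ∈ F ×ˢ F | p.1 < p.2} := by
        rw [card_filter, mul_sum, sum_product]
        simp only [mul_ite, mul_one, mul_zero]

lemma two_mul_sq_mul_sub_le {F : Finset α} {ℓ : ℕ} {q s : ℝ} (hs : 0 ≤ s)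
    (hthin : ∀ a ∈ F, ∀ b ∈ F, a < b → #{z ∈ F | a < z ∧ z < b} ≤ ℓ)
    (hdown : (#{x ∈ F | #{y ∈ F | y < x} < s} : ℝ) < q)
    (hup : (#{x ∈ F | #{y ∈ F | x < y} < s} : ℝ) < q) :
    2 * s ^ 2 * (#F - 2 * q) ≤ ℓ * #F ^ 2 := by
  classical
  set G := {x ∈ F | s ≤ #{y ∈ F | y < x} ∧ s ≤ #{y ∈ F | x < y}}
  have hG : (#F : ℝ) - 2 * q < #G := by
    have hcover : F ⊆ G ∪ ({x ∈ F | #{y ∈ F | y < x} < s} ∪ {x ∈ F | #{y ∈ F | x < y} < s}) := by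
      intro x hx
      simp only [G, mem_union, mem_filter, hx, true_and]
      by_cases h₁ : s ≤ #{y ∈ F | y < x} <;> by_cases h₂ : s ≤ #{y ∈ F | x < y} <;>
        simp_all only [not_le, true_or, or_true, and_self]
    have hcard := (card_le_card hcover).trans ((card_union_le _ _).trans
      (Nat.add_le_add_left (card_union_le _ _) _))
    have : (#F : ℝ) ≤ #G + (#{x ∈ F | #{y ∈ F | y < x} < s} + #{x ∈ F | #{y ∈ F | x < y} < s}) := by
      exact_mod_cast hcard
    linarith
  have hG_sum : s ^ 2 * #G ≤ ∑ x ∈ F, (#{y ∈ F | y < x} * #{y ∈ F | x < y} : ℝ) := by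
    calc s ^ 2 * #G = ∑ _x ∈ G, s * s := by rw [sum_const, nsmul_eq_mul]; ring
      _ ≤ ∑ x ∈ G, (#{y ∈ F | y < x} * #{y ∈ F | x < y} : ℝ) := by
        gcongr with x hx
        · exact (mem_filter.1 hx).2.1
        · exact (mem_filter.1 hx).2.2
      _ ≤ _ := sum_le_sum_of_subset_of_nonneg (filter_subset _ _) fun _ _ _ => by positivity
  have htriples : 2 * ∑ x ∈ F, (#{y ∈ F | y < x} * #{y ∈ F | x < y} : ℝ) ≤ ℓ * #F ^ 2 := by
    have := calc 2 * ∑ x ∈ F, #{y ∈ F | y < x} * #{y ∈ F | x < y}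
        ≤ ℓ * (2 * #{p ∈ F ×ˢ F | p.1 < p.2}) := by linarith [sum_card_mul_card_le hthin]
      _ ≤ ℓ * #F ^ 2 := Nat.mul_le_mul_left ℓ (two_mul_card_filter_lt_le_sq F)
    exact_mod_cast this
  nlinarith [sq_nonneg s]

end Counting

section Layered

variable {α : Type*}

lemma le_card_snoc {t ℓ : ℕ} {A : Fin t → Finset α} {B : Finset α} (hA : ∀ i, ℓ ≤ #(A i))
    (hB : ℓ ≤ #B) (i : Fin (t + 1)) : ℓ ≤ #((Fin.snoc A B : Fin (t + 1) → Finset α) i) := by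
  induction i using Fin.lastCases with
  | last => simpa only [Fin.snoc_last] using hB
  | cast i => simpa only [Fin.snoc_castSucc] using hA i

variable [Preorder α]

def IsLayered {t : ℕ} (A : Fin t → Finset α) : Prop :=
  ∀ i j, i < j → ∀ a ∈ A i, ∀ b ∈ A j, a < b

lemma IsLayered.pairwise_disjoint {t : ℕ} {A : Fin t → Finset α} (hA : IsLayered A) :
    ∀ i j, i ≠ j → Disjoint (A i) (A j) := by
  intro i j hij
  refine disjoint_left.2 fun a hai haj => ?_
  rcases hij.lt_or_gt with h | h
  · exact lt_irrefl a (hA i j h a hai a haj)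
  · exact lt_irrefl a (hA j i h a haj a hai)

lemma IsLayered.snoc {t : ℕ} {A : Fin t → Finset α} {B : Finset α} (hA : IsLayered A)
    (hAB : ∀ i, ∀ a ∈ A i, ∀ b ∈ B, a < b) :
    IsLayered (Fin.snoc A B : Fin (t + 1) → Finset α) := by
  intro i j hij
  induction j using Fin.lastCases with
  | last =>
    obtain ⟨i, rfl⟩ := Fin.exists_castSucc_eq.2 hij.ne
    simpa only [Fin.snoc_castSucc, Fin.snoc_last] using hAB i
  | cast j =>
    obtain ⟨i, rfl⟩ := Fin.exists_castSucc_eq.2 (hij.trans (Fin.castSucc_lt_last j)).ne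
    simpa only [Fin.snoc_castSucc] using hA i j (Fin.castSucc_lt_castSucc_iff.1 hij)

def LayeredBelow (ℓ t : ℕ) (x : α) : Prop :=
  ∃ A : Fin t → Finset α, IsLayered A ∧ (∀ i, ℓ ≤ #(A i)) ∧ ∀ i, ∀ a ∈ A i, a < x

lemma layeredBelow_zero (ℓ : ℕ) (x : α) : LayeredBelow ℓ 0 x :=
  ⟨Fin.elim0, fun i => i.elim0, fun i => i.elim0, fun i => i.elim0⟩

lemma LayeredBelow.exists_layered {ℓ t : ℕ} {x : α} (hx : LayeredBelow ℓ t x) {B : Finset α}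
    (hB : ℓ ≤ #B) (hxB : ∀ b ∈ B, x < b) :
    ∃ A : Fin (t + 1) → Finset α, IsLayered A ∧ ∀ i, ℓ ≤ #(A i) := by
  obtain ⟨A, hA, hcard, hlt⟩ := hx
  exact ⟨Fin.snoc A B, hA.snoc fun i a ha b hb => (hlt i a ha).trans (hxB b hb),
    le_card_snoc hcard hB⟩

lemma LayeredBelow.succ {ℓ t : ℕ} {x y : α} (hx : LayeredBelow ℓ t x) (hxy : x < y)
    {B : Finset α} (hB : ℓ ≤ #B) (hxB : ∀ b ∈ B, x < b ∧ b < y) : LayeredBelow ℓ (t + 1) y := by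
  obtain ⟨A, hA, hcard, hlt⟩ := hx
  refine ⟨Fin.snoc A B, hA.snoc fun i a ha b hb => (hlt i a ha).trans (hxB b hb).1,
    le_card_snoc hcard hB, fun i => ?_⟩
  induction i using Fin.lastCases with
  | last => simpa only [Fin.snoc_last] using fun b hb => (hxB b hb).2
  | cast i => simpa only [Fin.snoc_castSucc] using fun a ha => (hlt i a ha).trans hxy

variable [DecidableRel ((· < ·) : α → α → Prop)]

lemma exists_thin_of_forall_not_layeredBelow (ℓ m : ℕ) {W : Finset α}
    (hW : ∀ x ∈ W, ¬ LayeredBelow ℓ m x) : ∃ F : Finset α, (#W : ℝ) ≤ m * #F ∧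
      ∀ a ∈ F, ∀ b ∈ F, a < b → #{z ∈ F | a < z ∧ z < b} < ℓ := by
  classical
  rcases m.eq_zero_or_pos with rfl | hm
  · have : W = ∅ := eq_empty_of_forall_notMem fun x hx => hW x hx (layeredBelow_zero ℓ x)
    exact ⟨∅, by simp [this], by simp⟩
  let height (x : α) : ℕ := Nat.findGreatest (fun t => LayeredBelow ℓ t x) m
  have hheight (x : α) : LayeredBelow ℓ (height x) x :=
    Nat.findGreatest_spec (P := (LayeredBelow ℓ · x)) (Nat.zero_le m) (layeredBelow_zero ℓ x)
  have hmaps : ∀ x ∈ W, height x ∈ range m := fun x hx =>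
    mem_range.2 <| (Nat.findGreatest_le m).lt_of_ne fun h => hW x hx (h ▸ hheight x)
  obtain ⟨t, ht, hF⟩ := exists_le_card_fiber_of_nsmul_le_card_of_maps_to hmaps
    (nonempty_range_iff.2 hm.ne') (b := (#W : ℝ) / m)
    (by rw [card_range, nsmul_eq_mul, mul_div_cancel₀ _ (by positivity)])
  refine ⟨_, by rwa [← div_le_iff₀' (by positivity)], fun a ha b hb hab => ?_⟩
  by_contra! hfat
  have ha' : LayeredBelow ℓ t a := (mem_filter.1 ha).2 ▸ hheight a
  have hb' : t + 1 ≤ height b :=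
    Nat.le_findGreatest (mem_range.1 ht) (ha'.succ hab hfat fun z hz => (mem_filter.1 hz).2)
  rw [(mem_filter.1 hb).2] at hb'
  omega

lemma LayeredBelow.card_filter_gt_lt {ℓ m : ℕ}
    (hno : ¬ ∃ A : Fin (m + 1) → Finset α, IsLayered A ∧ ∀ i, ℓ ≤ #(A i)) {x : α}
    (hx : LayeredBelow ℓ m x) (V : Finset α) : #{y ∈ V | x < y} < ℓ := by
  by_contra! h
  exact hno (hx.exists_layered h fun b hb => (mem_filter.1 hb).2)

lemma card_lt_of_forall_layeredBelow {ℓ m : ℕ}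
    (hno : ¬ ∃ A : Fin (m + 1) → Finset α, IsLayered A ∧ ∀ i, ℓ ≤ #(A i)) {q s : ℝ}
    (hℓs : ℓ ≤ s) (hup : ∀ Q : Finset α, q ≤ #Q → ∃ x ∈ Q, s ≤ #{y ∈ Q | x < y})
    {V : Finset α} (hV : ∀ x ∈ V, LayeredBelow ℓ m x) : (#V : ℝ) < q := by
  have := card_filter_card_filter_lt_lt (fun y x : α => x < y) hup V
  rwa [filter_true_of_mem fun x hx =>
    (Nat.cast_lt.2 ((hV x hx).card_filter_gt_lt hno V)).trans_le hℓs] at this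

lemma exists_thin_card_gt [Fintype α] {ℓ m : ℕ}
    (hno : ¬ ∃ A : Fin (m + 1) → Finset α, IsLayered A ∧ ∀ i, ℓ ≤ #(A i)) {q s : ℝ}
    (hℓs : ℓ ≤ s) (hup : ∀ Q : Finset α, q ≤ #Q → ∃ x ∈ Q, s ≤ #{y ∈ Q | x < y}) :
    ∃ F : Finset α, (Fintype.card α : ℝ) - q < m * #F ∧
      ∀ a ∈ F, ∀ b ∈ F, a < b → #{z ∈ F | a < z ∧ z < b} < ℓ := by
  classical
  obtain ⟨F, hWF, hthin⟩ := exists_thin_of_forall_not_layeredBelow ℓ m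
    (W := {x : α | ¬ LayeredBelow ℓ m x}) fun x hx => (mem_filter.1 hx).2
  have hV := card_lt_of_forall_layeredBelow hno hℓs hup
    (V := {x : α | LayeredBelow ℓ m x}) fun x hx => (mem_filter.1 hx).2
  have hVW := card_filter_add_card_filter_not (s := (univ : Finset α)) (LayeredBelow ℓ m)
  rw [card_univ] at hVW
  have : (#{x : α | LayeredBelow ℓ m x} + #{x : α | ¬ LayeredBelow ℓ m x} : ℝ) =
      Fintype.card α := by
    exact_mod_cast hVW
  exact ⟨F, by linarith, hthin⟩

end Layered

lemma exists_layered_of_forall_exists_le {α : Type*} [Preorder α] [Fintype α]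
    [DecidableRel ((· < ·) : α → α → Prop)] {ℓ m : ℕ} {q : ℝ} (hℓ : 0 < ℓ)
    (hq : 7 * ℓ / 16 < q) (hqn : 16 * (m + 1) * q = 7 * Fintype.card α)
    (hdown : ∀ Q : Finset α, q ≤ #Q → ∃ x ∈ Q, 4 * √(q * ℓ) ≤ #{y ∈ Q | y < x})
    (hup : ∀ Q : Finset α, q ≤ #Q → ∃ x ∈ Q, 4 * √(q * ℓ) ≤ #{y ∈ Q | x < y}) :
    ∃ A : Fin (m + 1) → Finset α, IsLayered A ∧ ∀ i, ℓ ≤ #(A i) := by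
  by_contra hno
  have hℓ' : (1 : ℝ) ≤ ℓ := by exact_mod_cast hℓ
  have hq' : 7 / 16 < q := by linarith
  set s := 4 * √(q * ℓ)
  have hs : 0 ≤ s := by positivity
  have hs_sq : s ^ 2 = 16 * q * ℓ := by
    rw [mul_pow, Real.sq_sqrt (by positivity)]; ring
  have hℓs : (ℓ : ℝ) ≤ s := by nlinarith
  obtain ⟨F, hF, hthin⟩ := exists_thin_card_gt hno hℓs hup
  have hF_card : 16 * q / 7 ≤ #F := by
    by_contra! h
    nlinarith [mul_le_mul_of_nonneg_left h.le m.cast_nonneg]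
  obtain ⟨F', hF'F, hF'⟩ := exists_subset_card_eq (Nat.ceil_le.2 hF_card)
  have hF'thin : ∀ a ∈ F', ∀ b ∈ F', a < b → #{z ∈ F' | a < z ∧ z < b} ≤ ℓ :=
    fun a ha b hb hab => (card_le_card (filter_subset_filter _ hF'F)).trans
      (hthin a (hF'F ha) b (hF'F hb) hab).le
  have key := two_mul_sq_mul_sub_le hs hF'thin (card_filter_card_filter_lt_lt _ hdown F')
    (card_filter_card_filter_lt_lt _ hup F')
  rw [hF', hs_sq] at key
  have h₁ : 16 * q / 7 ≤ ⌈16 * q / 7⌉₊ := Nat.le_ceil _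
  have h₂ : ⌈16 * q / 7⌉₊ < 16 * q / 7 + 1 := Nat.ceil_lt_add_one (by positivity)
  -- `⌈16q/7⌉` lies strictly between the roots `(16 ∓ 8√3)q` of `μ² - 32qμ + 64q²`.
  have hwindow : (⌈16 * q / 7⌉₊ : ℝ) ^ 2 < 32 * q * (⌈16 * q / 7⌉₊ - 2 * q) := by
    nlinarith [mul_nonneg (sub_nonneg.2 h₁) (sub_pos.2 h₂).le]
  nlinarith [mul_lt_mul_of_pos_left hwindow (by positivity : (0 : ℝ) < ℓ)]

/-- Lemma 2.1: either there are `k` disjoint layered sets `A₁ < ⋯ < A_k` each of size at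
least `ℓ`, or there is a large subset `Q` in which every element has few elements of `Q`
below it, or a large subset `Q` in which every element has few elements of `Q` above it. -/
theorem layered_or_sparse {P : Type*} [PartialOrder P] [Fintype P]
    [DecidableRel ((· < ·) : P → P → Prop)] (k ℓ : ℕ) (hk : 0 < k) (hℓ : 0 < ℓ)
    (hℓk : (ℓ : ℝ) < (Fintype.card P : ℝ) / k) :
    (∃ A : Fin k → Finset P,
      (∀ i j, i ≠ j → Disjoint (A i) (A j)) ∧
      (∀ i, ℓ ≤ (A i).card) ∧
      (∀ i j : Fin k, i < j → ∀ a ∈ A i, ∀ b ∈ A j, a < b)) ∨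
    (∃ Q : Finset P, (7 * Fintype.card P : ℝ) / (16 * k) ≤ Q.card ∧
      ∀ x ∈ Q, ((Q.filter fun y => y < x).card : ℝ) < 4 * Real.sqrt (Q.card * ℓ)) ∨
    (∃ Q : Finset P, (7 * Fintype.card P : ℝ) / (16 * k) ≤ Q.card ∧
      ∀ x ∈ Q, ((Q.filter fun y => x < y).card : ℝ) < 4 * Real.sqrt (Q.card * ℓ)) := by
  obtain ⟨m, rfl⟩ : ∃ m, k = m + 1 := ⟨k - 1, by omega⟩
  set q : ℝ := 7 * Fintype.card P / (16 * (m + 1 : ℕ)) with hq_def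
  have hq : 7 * ℓ / 16 < q := by
    rw [lt_div_iff₀ (by positivity)] at hℓk
    rw [hq_def, lt_div_iff₀ (by positivity)]
    linarith
  have hqn : 16 * (m + 1) * q = 7 * Fintype.card P := by
    rw [hq_def]; push_cast; field_simp
  by_contra! h
  obtain ⟨hlayer, hdown, hup⟩ := h
  obtain ⟨A, hA, hcard⟩ := exists_layered_of_forall_exists_le hℓ hq hqn
    (fun Q hQ => (hdown Q hQ).imp fun x ⟨hx, hle⟩ => ⟨hx, le_trans (by gcongr) hle⟩)
    (fun Q hQ => (hup Q hQ).imp fun x ⟨hx, hle⟩ => ⟨hx, le_trans (by gcongr) hle⟩)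
  obtain ⟨i, j, hij, a, ha, b, hb, hab⟩ := hlayer A hA.pairwise_disjoint hcard
  exact hab (hA i j hij a ha b hb)
end

section
/- Let I ⊆ ℝ be a closed bounded interval, s a positive integer, and μ₁, …, μ_s finite absolutely continuous (atomless) Borel measures on I. Then there exists a partition of I into s consecutive intervals I₁, …, I_s (ordered left to right) and a permutation π of {1, …, s} such that μ_{π(i)}(I_i) ≥ μ_{π(i)}(I)/s for each i = 1, …, s. -/
/-!
For an atomless, locally finite measure `ν` the cumulative mass `t ↦ ν (a, t]` is continuous, so
by the intermediate value theorem every player `i` has a point `tᵢ ∈ [a, b]` with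
`μᵢ (a, tᵢ] = μᵢ (a, b] / s`. Cutting at `t = min tᵢ` and handing `(a, t]` to a player attaining
the minimum leaves every other player valuing the piece at most `1/s` of their total, hence the
rest `(t, b]` at least `(s - 1)/s` of it; induction on the `s - 1` remaining players finishes.
-/

open MeasureTheory Set
open scoped ENNReal

lemma measure_Ioc_le_measure_Ioc_add_measure_Icc (ν : Measure ℝ) {a u v x δ : ℝ}
    (hu : u ∈ Icc (x - δ) (x + δ)) (hv : v ∈ Icc (x - δ) (x + δ)) :
    ν (Ioc a u) ≤ ν (Ioc a v) + ν (Icc (x - δ) (x + δ)) := by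
  refine (measure_mono fun z hz => ?_).trans (measure_union_le _ _)
  by_cases hzv : z ≤ v
  · exact Or.inl ⟨hz.1, hzv⟩
  · exact Or.inr ⟨by linarith [hv.1], by linarith [hz.2, hu.2]⟩

lemma measure_Ioc_add_measure_Ioc (ν : Measure ℝ) {a t b : ℝ} (hat : a ≤ t) (htb : t ≤ b) :
    ν (Ioc a t) + ν (Ioc t b) = ν (Ioc a b) := by
  rw [← measure_union (Ioc_disjoint_Ioc_of_le le_rfl) measurableSet_Ioc,
    Ioc_union_Ioc_eq_Ioc hat htb]

section Atomless

variable (ν : Measure ℝ) [IsFiniteMeasureOnCompacts ν] [NullSingletonClass ν]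

theorem continuous_measure_Ioc (a : ℝ) : Continuous fun x => ν (Ioc a x) := by
  refine continuous_iff_continuousAt.2 fun x => ?_
  refine (ENNReal.tendsto_nhds measure_Ioc_lt_top.ne).2 fun ε hε => ?_
  obtain ⟨δ, hδ, hsmall⟩ : ∃ δ > 0, ν (Icc (x - δ) (x + δ)) < ε := by
    obtain ⟨r, hr, h⟩ := Metric.eventually_nhds_iff.1
      ((tendsto_measure_Icc ν x).eventually (gt_mem_nhds hε.bot_lt))
    exact ⟨r / 2, half_pos hr, h (by simpa [abs_of_pos hr] using half_lt_self hr)⟩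
  have hx : x ∈ Icc (x - δ) (x + δ) := ⟨by linarith, by linarith⟩
  filter_upwards [Icc_mem_nhds (by linarith : x - δ < x) (by linarith : x < x + δ)] with y hy
  exact ⟨tsub_le_iff_right.2 ((measure_Ioc_le_measure_Ioc_add_measure_Icc ν hx hy).trans
      (add_le_add le_rfl hsmall.le)),
    (measure_Ioc_le_measure_Ioc_add_measure_Icc ν hy hx).trans (add_le_add le_rfl hsmall.le)⟩

theorem exists_measure_Ioc_eq {a b : ℝ} (hab : a ≤ b) {r : ℝ≥0∞} (hr : r ≤ ν (Ioc a b)) :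
    ∃ t ∈ Icc a b, ν (Ioc a t) = r :=
  intermediate_value_Icc hab (continuous_measure_Ioc ν a).continuousOn ⟨by simp, by simpa using hr⟩

end Atomless

theorem exists_cut_measure_Ioc {ι : Type*} [Finite ι] [Nonempty ι] (μ : ι → Measure ℝ)
    [∀ i, IsFiniteMeasureOnCompacts (μ i)] [∀ i, NullSingletonClass (μ i)]
    {a b : ℝ} (hab : a ≤ b) {d : ℝ≥0∞} (hd : 1 ≤ d) :
    ∃ t ∈ Icc a b, ∃ i₀, μ i₀ (Ioc a t) = μ i₀ (Ioc a b) / d ∧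
      ∀ j, μ j (Ioc a t) ≤ μ j (Ioc a b) / d := by
  have hshare : ∀ i, μ i (Ioc a b) / d ≤ μ i (Ioc a b) := fun i =>
    ENNReal.div_le_of_le_mul (le_mul_of_one_le_right zero_le hd)
  choose t ht hmass using fun i => exists_measure_Ioc_eq (μ i) hab (hshare i)
  obtain ⟨i₀, hmin⟩ := Finite.exists_min t
  exact ⟨t i₀, ht i₀, i₀, hmass i₀,
    fun j => (hmass j).le.trans' (measure_mono (Ioc_subset_Ioc_right (hmin j)))⟩

lemma ENNReal.add_div_add_one_le_div {A B k : ℝ≥0∞} (hA : A ≠ ∞) (hk₀ : k ≠ 0) (hk : k ≠ ∞)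
    (h : A ≤ (A + B) / (k + 1)) : (A + B) / (k + 1) ≤ B / k := by
  set m := (A + B) / (k + 1)
  have hm : m * k + m = A + B := by
    rw [← mul_add_one, ENNReal.div_mul_cancel (by simp) (by simpa using hk)]
  rw [ENNReal.le_div_iff_mul_le (Or.inl hk₀) (Or.inl hk)]
  refine (ENNReal.add_le_add_iff_right hA).1 ?_
  calc m * k + A ≤ m * k + m := add_le_add le_rfl h
    _ = B + A := by rw [hm, add_comm]

lemma Fin.exists_perm_apply_zero_succAbove {n : ℕ} (i₀ : Fin (n + 1)) (σ : Equiv.Perm (Fin n)) :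
    ∃ π : Equiv.Perm (Fin (n + 1)), π 0 = i₀ ∧ ∀ j, π j.succ = i₀.succAbove (σ j) :=
  ⟨(finSuccEquiv n).trans ((Equiv.optionCongr σ).trans (finSuccEquiv' i₀).symm), by simp, by simp⟩

theorem exists_partition_perm_measure_Ioc (n : ℕ) {a b : ℝ} (hab : a ≤ b)
    (μ : Fin (n + 1) → Measure ℝ)
    [∀ i, IsFiniteMeasureOnCompacts (μ i)] [∀ i, NullSingletonClass (μ i)] :
    ∃ c : Fin (n + 2) → ℝ, Monotone c ∧ c 0 = a ∧ c (Fin.last (n + 1)) = b ∧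
      ∃ π : Equiv.Perm (Fin (n + 1)), ∀ i,
        μ (π i) (Ioc a b) / (n + 1 : ℕ) ≤ μ (π i) (Ioc (c i.castSucc) (c i.succ)) := by
  induction n generalizing a with
  | zero =>
    refine ⟨![a, b], Fin.monotone_iff_le_succ.2 fun i => ?_, rfl, rfl, 1, fun i => ?_⟩ <;>
      fin_cases i <;> simp [hab]
  | succ n ih =>
    obtain ⟨t, ⟨hat, htb⟩, i₀, hfirst, hrest⟩ :=
      exists_cut_measure_Ioc μ hab (d := (n + 1 : ℕ) + 1) le_add_self
    obtain ⟨c, hc, hc₀, hc_last, σ, hσ⟩ := ih htb (fun j => μ (i₀.succAbove j))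
    obtain ⟨π, hπ₀, hπ⟩ := Fin.exists_perm_apply_zero_succAbove i₀ σ
    refine ⟨Fin.cons a c, Fin.monotone_iff_le_succ.2 (Fin.cases ?_ fun j => ?_), rfl,
      by simpa using hc_last, π, Fin.cases ?_ fun j => ?_⟩
    · simpa [hc₀] using hat
    · simpa [← Fin.succ_castSucc] using hc (Fin.castSucc_le_succ j)
    · simpa [hπ₀, hc₀] using hfirst.ge
    · set e := i₀.succAbove (σ j)
      have hshare : μ e (Ioc a b) / ((n + 1 : ℕ) + 1) ≤ μ e (Ioc t b) / (n + 1 : ℕ) := by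
        have hfirst_e := hrest e
        rw [← measure_Ioc_add_measure_Ioc (μ e) hat htb] at hfirst_e ⊢
        exact ENNReal.add_div_add_one_le_div measure_Ioc_lt_top.ne (by simp) (by simp) hfirst_e
      rw [hπ, ← Fin.succ_castSucc, Fin.cons_succ, Fin.cons_succ, Nat.cast_succ]
      exact hshare.trans (hσ j)

theorem cake_cutting_general (a b : ℝ) (hab : a ≤ b) (s : ℕ) (hs : 0 < s)
    (μ : Fin s → MeasureTheory.Measure ℝ)
    (hfin : ∀ i, MeasureTheory.IsFiniteMeasure (μ i))
    (hatomless : ∀ i (x : ℝ), μ i {x} = 0) :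
    ∃ c : Fin (s + 1) → ℝ, Monotone c ∧ c 0 = a ∧ c (Fin.last s) = b ∧
      ∃ π : Equiv.Perm (Fin s), ∀ i : Fin s,
        μ (π i) (Set.Icc a b) / (s : ENNReal) ≤ μ (π i) (Set.Ioc (c i.castSucc) (c i.succ)) := by
  obtain ⟨n, rfl⟩ : ∃ n, s = n + 1 := Nat.exists_eq_add_one.2 hs
  have : ∀ i, NullSingletonClass (μ i) := fun i => ⟨hatomless i⟩
  obtain ⟨c, hc, hc₀, hc_last, π, hπ⟩ := exists_partition_perm_measure_Ioc n hab μ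
  exact ⟨c, hc, hc₀, hc_last, π, fun i => by simpa only [measure_congr Ioc_ae_eq_Icc] using hπ i⟩

/-- Cake-cutting lemma: for finite atomless measures `μ₁, …, μ_s` on an interval `[a, b]`,
there is a partition of `[a, b]` into `s` consecutive intervals and a permutation `π` such
that `μ_{π(i)}` gives the `i`-th interval at least a `1/s` fraction of its total mass. -/
theorem cake_cutting (a b : ℝ) (hab : a ≤ b) (s : ℕ) (hs : 0 < s)
    (μ : Fin s → MeasureTheory.Measure ℝ)
    (hfin : ∀ i, MeasureTheory.IsFiniteMeasure (μ i))
    (hatomless : ∀ i (x : ℝ), μ i {x} = 0)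
    (hsupp : ∀ i, μ i (Set.Icc a b)ᶜ = 0) :
    ∃ c : Fin (s + 1) → ℝ, Monotone c ∧ c 0 = a ∧ c (Fin.last s) = b ∧
      ∃ π : Equiv.Perm (Fin s), ∀ i : Fin s,
        μ (π i) (Set.Icc a b) / (s : ENNReal) ≤ μ (π i) (Set.Ioc (c i.castSucc) (c i.succ)) :=
  cake_cutting_general a b hab s hs μ hfin hatomless
end

section
/- Let k > k' ≥ 1 be integers. Suppose a finite set Q has a partition Q = A₁ ∪ … ∪ A_k into subsets of equal size a, and let B₁, …, B_{k'} be pairwise disjoint subsets of Q of equal size b ≥ a. Then there exist indices t₁, …, t_m with m ≥ k'/3, and integers 0 = h₀ < h₁ < … < h_m ≤ k, such that |B_{t_j} ∩ (⋃_{h_{j-1} < i ≤ h_j} A_i)| ≥ b/k' for all j ∈ {1, …, m}. -/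
/-!
Greedy choice of windows: starting from `h₀ = 0`, let `h_{j+1}` be the first block boundary at
which some still unused `B_t` has collected `b/k'` elements since `h_j`, and take that `t` as
`t_{j+1}`. When the greedy stops, each of the `r = k' - m` unused sets has fewer than `b/k'`
elements in each stretch `[h_j, h_{j+1} - 1)` and in the final stretch `[h_m, k)`, while the `m`
remaining blocks `h_{j+1} - 1` hold at most `a ≤ b` elements of the unused sets each. Since the
unused sets hold `r b` elements in total, `r b < (m + 1) r b / k' + m b`, which forces `r ≤ 2 m`.
-/

open Finset

section WindowChain

variable {ι : Type*} (w : ι → ℕ → ℕ) (c b k : ℕ)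

-- `b ≤ c * s` stands for `s ≥ b / c`.
structure IsWindowChain (p m : ℕ) (t : Fin m → ι) (h : Fin (m + 1) → ℕ) : Prop where
  injective : Function.Injective t
  strictMono : StrictMono h
  head : h 0 = p
  last_le : h (Fin.last m) ≤ k
  le_window : ∀ j, b ≤ c * ∑ i ∈ Ico (h j.castSucc) (h j.succ), w (t j) i

variable {w c b k}

theorem IsWindowChain.nil {p : ℕ} (hp : p ≤ k) :
    IsWindowChain w c b k p 0 Fin.elim0 (fun _ => p) where
  injective i := i.elim0
  strictMono := Subsingleton.strictMono (α := Fin 1) _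
  head := rfl
  last_le := hp
  le_window j := j.elim0

theorem IsWindowChain.cons {p q m : ℕ} {t : Fin m → ι} {h : Fin (m + 1) → ℕ}
    (hc : IsWindowChain w c b k q m t h) (hpq : p < q) {x : ι} (hx : x ∉ Set.range t)
    (hwin : b ≤ c * ∑ i ∈ Ico p q, w x i) :
    IsWindowChain w c b k p (m + 1) (Fin.cons x t) (Fin.cons p h) where
  injective := Fin.cons_injective_iff.mpr ⟨hx, hc.injective⟩
  strictMono := Fin.strictMono_iff_lt_succ.mpr fun j => j.cases (by simpa [hc.head] using hpq)
    fun j => by simpa [← Fin.succ_castSucc] using hc.strictMono j.castSucc_lt_succ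
  head := rfl
  last_le := by simpa using hc.last_le
  le_window j := j.cases (by simpa [hc.head] using hwin)
    fun j => by simpa [← Fin.succ_castSucc] using hc.le_window j

end WindowChain

section Greedy

variable {ι : Type*} {w : ι → ℕ → ℕ} {c b k a : ℕ}

theorem mul_sum_add_card_le {R : Finset ι} {f : ι → ℕ}
    (hf : ∀ x ∈ R, c * f x < b) : c * ∑ x ∈ R, f x + #R ≤ #R * b := by
  rw [mul_sum, card_eq_sum_ones, ← sum_add_distrib, sum_mul, one_mul]
  exact sum_le_sum fun x hx => hf x hx

theorem mul_sum_sum_Ico_succ_add_card_le {R : Finset ι} {p q : ℕ} (hpq : p ≤ q)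
    (hstuck : ∀ x ∈ R, c * ∑ i ∈ Ico p q, w x i < b) (hlast : ∑ x ∈ R, w x q ≤ a) :
    c * ∑ x ∈ R, ∑ i ∈ Ico p (q + 1), w x i + #R ≤ #R * b + c * a := by
  simp only [sum_Ico_succ_top hpq, sum_add_distrib, mul_add]
  linarith [mul_sum_add_card_le hstuck, Nat.mul_le_mul_left c hlast]

variable [DecidableEq ι]

theorem sdiff_image_cons (U : Finset ι) (x : ι) {m : ℕ} (t : Fin m → ι) :
    U \ univ.image (Fin.cons x t : Fin (m + 1) → ι) = U.erase x \ univ.image t := by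
  ext y
  simp only [mem_sdiff, mem_erase, mem_image, mem_univ, true_and, Fin.exists_fin_succ,
    Fin.cons_zero, Fin.cons_succ]
  tauto

theorem exists_isWindowChain (hb : 0 < b) (U : Finset ι) (hcol : ∀ i, ∑ x ∈ U, w x i ≤ a)
    (p : ℕ) (hp : p ≤ k) :
    ∃ m t h, IsWindowChain w c b k p m t h ∧ (∀ j, t j ∈ U) ∧
      c * ∑ x ∈ U \ univ.image t, ∑ i ∈ Ico p k, w x i + (m + 1) * #(U \ univ.image t)
        ≤ (m + 1) * #(U \ univ.image t) * b + m * (c * a) := by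
  by_cases hex : ∃ q, p < q ∧ q ≤ k ∧ ∃ x ∈ U, b ≤ c * ∑ i ∈ Ico p q, w x i
  · obtain ⟨hpq, hqk, x₀, hx₀, hwin⟩ := Nat.find_spec hex
    set q := Nat.find hex
    have hstuck : ∀ x ∈ U, c * ∑ i ∈ Ico p (q - 1), w x i < b := by
      intro x hx
      by_contra! hle
      have hpq' : p < q - 1 := by
        by_contra! hqp
        simp [Ico_eq_empty_of_le hqp] at hle
        omega
      exact Nat.find_min hex (by omega : q - 1 < q) ⟨hpq', by omega, x, hx, hle⟩
    obtain ⟨m, t, h, hc, htU, hbound⟩ := exists_isWindowChain hb (U.erase x₀)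
      (fun i => (sum_le_sum_of_subset (erase_subset _ _)).trans (hcol i)) q hqk
    refine ⟨m + 1, Fin.cons x₀ t, Fin.cons p h,
      hc.cons hpq (fun ⟨j, hj⟩ => by simpa [hj] using htU j) hwin,
      fun j => j.cases hx₀ fun j => mem_of_mem_erase (htU j), ?_⟩
    rw [sdiff_image_cons]
    set R := U.erase x₀ \ univ.image t
    have hRU : R ⊆ U := sdiff_subset.trans (erase_subset _ _)
    have hgap := mul_sum_sum_Ico_succ_add_card_le (R := R) (by omega : p ≤ q - 1)
      (fun x hx => hstuck x (hRU hx)) ((sum_le_sum_of_subset hRU).trans (hcol _))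
    rw [Nat.sub_add_cancel (by omega : 1 ≤ q)] at hgap
    have hsplit : ∑ x ∈ R, ∑ i ∈ Ico p k, w x i
        = ∑ x ∈ R, ∑ i ∈ Ico p q, w x i + ∑ x ∈ R, ∑ i ∈ Ico q k, w x i := by
      rw [← sum_add_distrib]
      exact sum_congr rfl fun x _ => (sum_Ico_consecutive _ hpq.le hqk).symm
    rw [hsplit]
    linarith
  · refine ⟨0, Fin.elim0, fun _ => p, .nil hp, fun j => j.elim0, ?_⟩
    simpa using mul_sum_add_card_le fun x hx => by
      by_contra! hle
      rcases hp.lt_or_eq with hpk | rfl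
      · exact hex ⟨k, hpk, le_rfl, x, hx, hle⟩
      · simp at hle; omega
termination_by k - p

end Greedy

section Blocks

open Function

variable {Q : Type*} {k : ℕ}

-- Extending the blocks by `∅` past `k` lets windows be indexed by `Finset.Ico` in `ℕ`.
def natBlocks (A : Fin k → Finset Q) (n : ℕ) : Finset Q :=
  if hn : n < k then A ⟨n, hn⟩ else ∅

theorem pairwise_disjoint_natBlocks {A : Fin k → Finset Q} (hA : Pairwise (Disjoint on A)) :
    Pairwise (Disjoint on natBlocks A) := by
  intro n n' hne
  simp only [onFun, natBlocks]
  split_ifs with hn hn'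
  · exact hA (Fin.ne_of_val_ne hne : (⟨n, hn⟩ : Fin k) ≠ ⟨n', hn'⟩)
  all_goals simp

theorem card_natBlocks_le {A : Fin k → Finset Q} {a : ℕ} (hA : ∀ i, #(A i) = a) (n : ℕ) :
    #(natBlocks A n) ≤ a := by
  unfold natBlocks
  split_ifs <;> simp [hA]

variable [DecidableEq Q]

theorem biUnion_filter_eq_biUnion_Ico_natBlocks (A : Fin k → Finset Q) (p q : ℕ) :
    (univ.filter fun i : Fin k => p ≤ i.val ∧ i.val < q).biUnion A
      = (Ico p q).biUnion (natBlocks A) := by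
  ext y
  simp only [mem_biUnion, mem_filter, mem_univ, true_and, mem_Ico, natBlocks]
  constructor
  · rintro ⟨i, hi, hy⟩
    exact ⟨i, hi, by simpa using hy⟩
  · rintro ⟨n, hn, hy⟩
    split_ifs at hy with hnk
    · exact ⟨⟨n, hnk⟩, hn, hy⟩
    · simp at hy

theorem card_inter_biUnion {ι : Type*} {F : ι → Finset Q} (hF : Pairwise (Disjoint on F))
    (S : Finset Q) (s : Finset ι) : #(S ∩ s.biUnion F) = ∑ i ∈ s, #(S ∩ F i) := by
  rw [inter_biUnion, card_biUnion]
  exact fun i _ j _ hij => (hF hij).mono inter_subset_right inter_subset_right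

theorem sum_card_inter_le_card {ι : Type*} {B : ι → Finset Q} (hB : Pairwise (Disjoint on B))
    (s : Finset ι) (C : Finset Q) : ∑ x ∈ s, #(B x ∩ C) ≤ #C := by
  rw [← card_biUnion fun i _ j _ hij => (hB hij).mono inter_subset_left inter_subset_left]
  exact card_le_card (biUnion_subset.mpr fun _ _ => inter_subset_right)

theorem card_inter_biUnion_filter_eq_sum {A : Fin k → Finset Q}
    (hA : Pairwise (Disjoint on A)) (S : Finset Q) (p q : ℕ) :
    #(S ∩ (univ.filter fun i : Fin k => p ≤ i.val ∧ i.val < q).biUnion A)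
      = ∑ n ∈ Ico p q, #(S ∩ natBlocks A n) := by
  rw [biUnion_filter_eq_biUnion_Ico_natBlocks, card_inter_biUnion (pairwise_disjoint_natBlocks hA)]

end Blocks

theorem add_card_univ_sdiff_image {ι : Type*} [Fintype ι] [DecidableEq ι] {m : ℕ}
    {t : Fin m → ι} (ht : Function.Injective t) :
    m + #(univ \ univ.image t) = Fintype.card ι := by
  rw [← compl_eq_univ_sdiff, card_compl, card_image_of_injective _ ht, card_univ,
    Fintype.card_fin]
  have := Fintype.card_le_of_injective t ht
  simp only [Fintype.card_fin] at this
  omega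

theorem le_three_mul_of_leftover_bound {n m r a b : ℕ} (hab : a ≤ b) (hn : n = m + r)
    (h : n * (r * b) + (m + 1) * r ≤ (m + 1) * r * b + m * (n * a)) : n ≤ 3 * m := by
  subst hn
  by_contra! hlt
  have h1 : m * ((m + r) * a) ≤ m * ((m + r) * b) := by gcongr
  have h2 : (2 * m + 1) * (r * b) ≤ r * (r * b) := by gcongr; omega
  have h3 : m * m * b ≤ m * r * b := by gcongr; omega
  nlinarith

theorem partition_lemma_general {Q : Type*} [Fintype Q] [DecidableEq Q] (k k' a b : ℕ)
    (hkk : k' < k)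
    (A : Fin k → Finset Q)
    (hAdisj : ∀ i j, i ≠ j → Disjoint (A i) (A j))
    (hAcover : Finset.univ.biUnion A = Finset.univ)
    (hAsize : ∀ i, (A i).card = a)
    (B : Fin k' → Finset Q)
    (hBdisj : ∀ i j, i ≠ j → Disjoint (B i) (B j))
    (hBsize : ∀ i, (B i).card = b) (hba : a ≤ b) :
    ∃ m : ℕ, (k' : ℝ) / 3 ≤ m ∧
      ∃ t : Fin m → Fin k', Function.Injective t ∧
        ∃ h : Fin (m + 1) → ℕ, StrictMono h ∧ h 0 = 0 ∧ h (Fin.last m) ≤ k ∧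
          ∀ j : Fin m, (b : ℝ) / k' ≤
            ((B (t j) ∩ (Finset.univ.filter fun i : Fin k =>
              h j.castSucc ≤ i.val ∧ i.val < h j.succ).biUnion A).card : ℝ) := by
  rcases Nat.eq_zero_or_pos b with rfl | hb
  · exact ⟨k', by linarith [Nat.cast_nonneg (α := ℝ) k'], id, Function.injective_id, Fin.val,
      Fin.val_strictMono, rfl, hkk.le, fun j => by simp⟩
  have hwindow := card_inter_biUnion_filter_eq_sum hAdisj
  have hrow (x : Fin k') : ∑ n ∈ Ico 0 k, #(B x ∩ natBlocks A n) = b := by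
    rw [← hwindow]
    simp [Fin.is_lt, hAcover, hBsize]
  obtain ⟨m, t, h, hc, -, hbound⟩ := exists_isWindowChain (c := k') hb univ
    (fun n => (sum_card_inter_le_card hBdisj _ _).trans (card_natBlocks_le hAsize n)) 0 k.zero_le
  simp only [hrow, sum_const, smul_eq_mul] at hbound
  have hm : k' ≤ m * 3 := by
    have hcard := add_card_univ_sdiff_image hc.injective
    rw [Fintype.card_fin] at hcard
    linarith [le_three_mul_of_leftover_bound hba hcard.symm hbound]
  refine ⟨m, div_le_of_le_mul₀ (by norm_num) (Nat.cast_nonneg m) (by exact_mod_cast hm),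
    t, hc.injective, h, hc.strictMono, hc.head, hc.last_le, fun j => ?_⟩
  have hj := hc.le_window j
  rw [hwindow]
  exact div_le_of_le_mul₀ (Nat.cast_nonneg _) (Nat.cast_nonneg _)
    (by rw [mul_comm]; exact_mod_cast hj)

/-- Lemma 3.3: given a partition of `Q` into `k` sets of size `a` and `k'` disjoint sets
`B₁, …, B_{k'}` of size `b ≥ a`, there are `m ≥ k'/3` distinct indices `t₁, …, t_m` and
thresholds `0 = h₀ < ⋯ < h_m ≤ k` with `|B_{t_j} ∩ (⋃_{h_{j-1} < i ≤ h_j} A_i)| ≥ b/k'`. -/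
theorem partition_lemma {Q : Type*} [Fintype Q] [DecidableEq Q] (k k' a b : ℕ)
    (hk' : 1 ≤ k') (hkk : k' < k)
    (A : Fin k → Finset Q)
    (hAdisj : ∀ i j, i ≠ j → Disjoint (A i) (A j))
    (hAcover : Finset.univ.biUnion A = Finset.univ)
    (hAsize : ∀ i, (A i).card = a)
    (B : Fin k' → Finset Q)
    (hBdisj : ∀ i j, i ≠ j → Disjoint (B i) (B j))
    (hBsize : ∀ i, (B i).card = b) (hba : a ≤ b) :
    ∃ m : ℕ, (k' : ℝ) / 3 ≤ m ∧
      ∃ t : Fin m → Fin k', Function.Injective t ∧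
        ∃ h : Fin (m + 1) → ℕ, StrictMono h ∧ h 0 = 0 ∧ h (Fin.last m) ≤ k ∧
          ∀ j : Fin m, (b : ℝ) / k' ≤
            ((B (t j) ∩ (Finset.univ.filter fun i : Fin k =>
              h j.castSucc ≤ i.val ∧ i.val < h j.succ).biUnion A).card : ℝ) :=
  partition_lemma_general k k' a b hkk A hAdisj hAcover hAsize B hBdisj hBsize hba
end
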